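/- Let H be a digraph and t ≥ 2, and let f be a t-frugal homomorphism of the gadget F to H, where F consists of a chain of copies of F₀ forcing u₁,…,u_{t−1} to a common image, a further copy of F₀ forcing v₁ and v₂ to a common image, and a vertex q with arcs from each of u₁,…,u_{t−1}, v₁, v₂ to q. Then f(u₁) ≠ f(v₁). -/

import Mathlib

/-!
A copy of `F₀` is rigid because its in-degrees are tight: its two sinks have `t·Δ⁻(H)`
in-neighbours each, which a `t`-frugal homomorphism spreads over at most `Δ⁻(H)` in-neighbours
of the image with at most `t` per image, so every nonempty image class among them has exactly
`t` elements. If the ends `w`, `z` had distinct images, the class of `f w` at the sink above `w`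
would contain `t - 1 ≥ 1` of the shared vertices, and at the sink above `z` that class would
consist of these `t - 1` vertices alone. So `u₁, …, u_{t-1}` share an image, as do `v₁, v₂`,
and `f u₁ = f v₁` would give `q` a class of `t + 1` in-neighbours.
-/

/-- Vertices of the gadget `F`: `u i` (the shared endpoints `u₁,…,u_{t-1}`, valid for
`i < t - 1`), the chain copies of `F₀` (`x j`, `y j` and common in-neighbours `a j k`,
valid for `j < t - 2`, `k < m`, where copy `j` joins `u j` and `u (j+1)`), the extra copy
of `F₀` on `v₂, v₁` (vertices `v1`, `v2`, `xv`, `yv`, `av k`), and the apex `q`. -/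
inductive FV : Type
  | u : ℕ → FV
  | x : ℕ → FV
  | y : ℕ → FV
  | a : ℕ → ℕ → FV
  | v1 : FV
  | v2 : FV
  | xv : FV
  | yv : FV
  | av : ℕ → FV
  | q : FV
  deriving DecidableEq

/-- Arcs of the gadget `F` (with `m = t·Δ⁻(H) - 1` common in-neighbours in each copy of
`F₀`): each chain copy `j` has arcs `u j → x j`, `u (j+1) → y j`, `a j k → x j`,
`a j k → y j`; the extra copy has `v₂ → xv`, `v₁ → yv`, `av k → xv`, `av k → yv`; and
`q` receives arcs from `u 0, …, u (t-2)`, `v₁` and `v₂`. -/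
def FArc (t m : ℕ) : FV → FV → Prop := fun p r =>
  match p, r with
  | .u i, .x j => i = j ∧ j < t - 2
  | .u i, .y j => i = j + 1 ∧ j < t - 2
  | .a i k, .x j => i = j ∧ j < t - 2 ∧ k < m
  | .a i k, .y j => i = j ∧ j < t - 2 ∧ k < m
  | .v2, .xv => True
  | .v1, .yv => True
  | .av k, .xv => k < m
  | .av k, .yv => k < m
  | .u i, .q => i < t - 1
  | .v1, .q => True
  | .v2, .q => True
  | _, _ => False

theorem Finset.card_filter_eq_of_card_eq_mul {α β : Type*} [DecidableEq β] {s : Finset α}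
    {T : Finset β} {g : α → β} {t d : ℕ} (hmaps : Set.MapsTo g s T) (hT : T.card ≤ d)
    (hfib : ∀ b ∈ T, {a ∈ s | g a = b}.card ≤ t) (hs : s.card = t * d) :
    ∀ b ∈ T, {a ∈ s | g a = b}.card = t := by
  have hsum : ∑ b ∈ T, {a ∈ s | g a = b}.card = ∑ _b ∈ T, t := by
    refine le_antisymm (Finset.sum_le_sum hfib) ?_
    calc ∑ _b ∈ T, t = T.card * t := by rw [Finset.sum_const, smul_eq_mul]
      _ ≤ d * t := Nat.mul_le_mul_right t hT
      _ = ∑ b ∈ T, {a ∈ s | g a = b}.card := by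
        rw [← Finset.card_eq_sum_card_fiberwise hmaps, hs, Nat.mul_comm]
  exact (Finset.sum_eq_sum_iff_of_le hfib).1 hsum

section Frugal

variable {V W : Type*} (Arc : V → V → Prop) (B : W → W → Prop) (f : V → W) (t : ℕ)

def IsDigraphHom : Prop := ∀ p r, Arc p r → B (f p) (f r)

def IsFrugal : Prop := ∀ (v : V) (h : W), Nat.card {p : V // Arc p v ∧ f p = h} ≤ t

variable {Arc B f t}

theorem natCard_inFiber_eq_card_filter [DecidableEq W] {v : V} {s : Finset V}
    (hs : ∀ p, Arc p v ↔ p ∈ s) (h : W) :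
    Nat.card {p : V // Arc p v ∧ f p = h} = {p ∈ s | f p = h}.card := by
  rw [← Nat.card_eq_finsetCard]
  exact Nat.card_congr (Equiv.subtypeEquivRight fun p => by simp [hs])

theorem IsFrugal.card_filter_eq [Finite W] [DecidableEq W] {d : ℕ} (hhom : IsDigraphHom Arc B f)
    (hfrugal : IsFrugal Arc f t) (hdeg : ∀ w, Nat.card {u : W // B u w} ≤ d) {v : V}
    {s : Finset V} (hs : ∀ p, Arc p v ↔ p ∈ s) (hcard : s.card = t * d) {p : V}
    (hp : p ∈ s) : {p' ∈ s | f p' = f p}.card = t := by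
  classical
  have := Fintype.ofFinite W
  let T : Finset W := {u | B u (f v)}
  have hmaps : Set.MapsTo f s T := fun a ha => by
    simpa [T] using hhom a v ((hs a).2 ha)
  have hT : T.card ≤ d := by
    rw [← Fintype.card_subtype, ← Nat.card_eq_fintype_card]
    exact hdeg (f v)
  have hfib : ∀ b ∈ T, {a ∈ s | f a = b}.card ≤ t := fun b _ => by
    rw [← natCard_inFiber_eq_card_filter hs]
    exact hfrugal v b
  exact Finset.card_filter_eq_of_card_eq_mul hmaps hT hfib hcard (f p) (hmaps hp)

theorem IsFrugal.apply_eq_of_inNbrs_eq_insert [Finite W] [DecidableEq V] [DecidableEq W]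
    {d : ℕ} (hhom : IsDigraphHom Arc B f) (hfrugal : IsFrugal Arc f t)
    (hdeg : ∀ w, Nat.card {u : W // B u w} ≤ d) (ht : 2 ≤ t) {x y w z : V} {S : Finset V}
    (hx : ∀ p, Arc p x ↔ p ∈ insert w S) (hy : ∀ p, Arc p y ↔ p ∈ insert z S)
    (hw : w ∉ S) (hz : z ∉ S) (hS : S.card + 1 = t * d) : f w = f z := by
  by_contra hne
  have hfx := hfrugal.card_filter_eq hhom hdeg hx (by rwa [Finset.card_insert_of_notMem hw])
    (Finset.mem_insert_self w S)
  rw [Finset.filter_insert, if_pos rfl, Finset.card_insert_of_notMem (by simp [hw])] at hfx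
  obtain ⟨s, hs⟩ : ({p ∈ S | f p = f w}).Nonempty := by
    rw [← Finset.card_pos]; omega
  obtain ⟨hsS, hsw⟩ := Finset.mem_filter.1 hs
  have hfy := hfrugal.card_filter_eq hhom hdeg hy (by rwa [Finset.card_insert_of_notMem hz])
    (Finset.mem_insert_of_mem hsS)
  rw [Finset.filter_insert, if_neg (by rw [hsw]; exact Ne.symm hne), hsw] at hfy
  omega

end Frugal

namespace FV

open Finset

def inNbrs (t m : ℕ) : FV → Finset FV
  | x j => if j < t - 2 then insert (u j) ((range m).image (a j)) else ∅
  | y j => if j < t - 2 then insert (u (j + 1)) ((range m).image (a j)) else ∅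
  | xv => insert v2 ((range m).image av)
  | yv => insert v1 ((range m).image av)
  | q => insert v1 (insert v2 ((range (t - 1)).image u))
  | _ => ∅

theorem fArc_iff_mem_inNbrs {t m : ℕ} (p r : FV) : FArc t m p r ↔ p ∈ inNbrs t m r := by
  cases r <;> cases p <;> simp [FArc, inNbrs] <;> split_ifs <;> simp [*] <;> omega

theorem card_image_a (j m : ℕ) : ((range m).image (a j)).card = m := by
  rw [card_image_of_injective _ fun _ _ h => (a.inj h).2, card_range]

theorem card_image_av (m : ℕ) : ((range m).image av).card = m := by
  rw [card_image_of_injective _ fun _ _ h => av.inj h, card_range]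

theorem card_inNbrs_q (t m : ℕ) : (inNbrs t m q).card = t - 1 + 2 := by
  rw [inNbrs, card_insert_of_notMem (by simp), card_insert_of_notMem (by simp),
    card_image_of_injective _ fun _ _ h => u.inj h, card_range]

section Gadget

variable {W : Type*} [Finite W] [DecidableEq W] {B : W → W → Prop} {f : FV → W} {t d : ℕ}
  (hhom : IsDigraphHom (FArc t (t * d - 1)) B f) (hfrugal : IsFrugal (FArc t (t * d - 1)) f t)
  (hdeg : ∀ w, Nat.card {u : W // B u w} ≤ d) (ht : 2 ≤ t) (hd : 1 ≤ d)
include hhom hfrugal hdeg ht hd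

theorem apply_u_succ {j : ℕ} (hj : j < t - 2) : f (u j) = f (u (j + 1)) :=
  hfrugal.apply_eq_of_inNbrs_eq_insert hhom hdeg ht (x := x j) (y := y j)
    (fun p => by rw [fArc_iff_mem_inNbrs, inNbrs, if_pos hj])
    (fun p => by rw [fArc_iff_mem_inNbrs, inNbrs, if_pos hj]) (by simp) (by simp)
    (by rw [card_image_a]; exact Nat.sub_add_cancel (Nat.mul_pos (by omega) hd))

theorem apply_u_eq_apply_u_zero {i : ℕ} (hi : i < t - 1) : f (u i) = f (u 0) := by
  induction i with
  | zero => rfl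
  | succ i ih => exact (apply_u_succ hhom hfrugal hdeg ht hd (by omega)).symm.trans (ih (by omega))

theorem apply_v2_eq_apply_v1 : f v2 = f v1 :=
  hfrugal.apply_eq_of_inNbrs_eq_insert hhom hdeg ht (x := xv) (y := yv)
    (fun p => by rw [fArc_iff_mem_inNbrs, inNbrs]) (fun p => by rw [fArc_iff_mem_inNbrs, inNbrs])
    (by simp) (by simp)
    (by rw [card_image_av]; exact Nat.sub_add_cancel (Nat.mul_pos (by omega) hd))

end Gadget

end FV

/-- For a digraph `H` with maximum in-degree `d ≥ 1` and `t ≥ 2`, every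
`t`-frugal homomorphism `f` of the gadget `F` to `H` satisfies `f(u₁) ≠ f(v₁)`. -/
theorem gadget_separates {W : Type*} [Finite W] (B : W → W → Prop) (t d : ℕ)
    (ht : 2 ≤ t) (hd : 1 ≤ d)
    (hmax : IsGreatest (Set.range fun v : W => Nat.card {u : W // B u v}) d)
    (f : FV → W)
    (hhom : ∀ p r, FArc t (t * d - 1) p r → B (f p) (f r))
    (hfrugal : ∀ (v : FV) (h : W),
      Nat.card {p : FV // FArc t (t * d - 1) p v ∧ f p = h} ≤ t) :
    f (FV.u 0) ≠ f FV.v1 := by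
  classical
  intro heq
  have hdeg : ∀ w, Nat.card {u : W // B u w} ≤ d := fun w => hmax.2 ⟨w, rfl⟩
  have hfiber : ∀ p ∈ FV.inNbrs t (t * d - 1) .q, f p = f (.u 0) := by
    intro p hp
    simp only [FV.inNbrs, Finset.mem_insert, Finset.mem_image, Finset.mem_range] at hp
    rcases hp with rfl | rfl | ⟨i, hi, rfl⟩
    · exact heq.symm
    · exact (FV.apply_v2_eq_apply_v1 hhom hfrugal hdeg ht hd).trans heq.symm
    · exact FV.apply_u_eq_apply_u_zero hhom hfrugal hdeg ht hd hi
  have := hfrugal .q (f (.u 0))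
  rw [natCard_inFiber_eq_card_filter (FV.fArc_iff_mem_inNbrs · .q),
    Finset.filter_true_of_mem hfiber, FV.card_inNbrs_q] at this
  omega
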